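/- Fix β ∈ ℝ. A linear map R: V → V preserves parity (maps span{T₁,T₂} into itself and span{T₃,T₄} into itself) and is super skew-symmetric with respect to Ω_β, i.e. Ω_β(R(x),y) + Ω_β(x,R(y)) = 0 for all x, y ∈ V, if and only if there exist m₁, m₂, m₃, m₄ ∈ ℝ such that R(T₁) = m₁T₁ − βm₁T₂, R(T₂) = −m₁T₂, R(T₃) = m₂T₃ + m₄T₄, R(T₄) = −m₃T₃ − m₂T₄. (This is the general form of the R-operator used in the Yang–Baxter deformation of the (C⁵₀+A) WZW model.) -/
import Mathlib


noncomputable section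

/-- The underlying supervector space `V = ℝ⁴`, with basis `T 0, T 1` even and `T 2, T 3` odd
(corresponding to `T₁, T₂; T₃, T₄`). -/
abbrev V4 : Type := Fin 4 → ℝ

/-- The basis vectors `T₁, T₂, T₃, T₄` (zero-indexed). -/
def T (i : Fin 4) : V4 := Pi.single i 1

/-- The even subspace `span{T₁,T₂}`. -/
def spanEven : Submodule ℝ V4 := Submodule.span ℝ {T 0, T 1}

/-- The odd subspace `span{T₃,T₄}`. -/
def spanOdd : Submodule ℝ V4 := Submodule.span ℝ {T 2, T 3}

/-- The bilinear form `Ω_β` on `V`: `Ω_β(T₁,T₁) = β`, `Ω_β(T₁,T₂) = Ω_β(T₂,T₁) = 1`,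
`Ω_β(T₃,T₄) = 1`, `Ω_β(T₄,T₃) = −1`, all other values on basis vectors zero. -/
def OmegaForm (β : ℝ) (x y : V4) : ℝ :=
  β * x 0 * y 0 + x 0 * y 1 + x 1 * y 0 + x 2 * y 3 - x 3 * y 2

lemma finNe :
    ((0:Fin 4) ≠ 1) ∧ ((0:Fin 4) ≠ 2) ∧ ((0:Fin 4) ≠ 3) ∧ ((1:Fin 4) ≠ 0) ∧ ((1:Fin 4) ≠ 2) ∧
    ((1:Fin 4) ≠ 3) ∧ ((2:Fin 4) ≠ 0) ∧ ((2:Fin 4) ≠ 1) ∧ ((2:Fin 4) ≠ 3) ∧ ((3:Fin 4) ≠ 0) ∧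
    ((3:Fin 4) ≠ 1) ∧ ((3:Fin 4) ≠ 2) := by decide

lemma decomp (x : V4) : x = x 0 • T 0 + x 1 • T 1 + x 2 • T 2 + x 3 • T 3 := by
  funext i; fin_cases i <;> simp [T, Pi.single_apply]

lemma mem_spanEven_iff (x : V4) : x ∈ spanEven ↔ x 2 = 0 ∧ x 3 = 0 := by
  constructor
  · intro hx
    induction hx using Submodule.span_induction with
    | mem v hv => rcases hv with h | h <;> subst h <;> simp [T, Pi.single_apply]
    | zero => simp
    | add u v _ _ hu hv => simp [hu.1, hu.2, hv.1, hv.2]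
    | smul a v _ hv => simp [hv.1, hv.2]
  · rintro ⟨h2, h3⟩
    have : x = x 0 • T 0 + x 1 • T 1 := by
      funext i; fin_cases i <;> simp [T, Pi.single_apply, h2, h3]
    rw [this]
    exact add_mem (Submodule.smul_mem _ _ (Submodule.subset_span (by simp)))
      (Submodule.smul_mem _ _ (Submodule.subset_span (by simp)))

lemma mem_spanOdd_iff (x : V4) : x ∈ spanOdd ↔ x 0 = 0 ∧ x 1 = 0 := by
  constructor
  · intro hx
    induction hx using Submodule.span_induction with
    | mem v hv => rcases hv with h | h <;> subst h <;> simp [T, Pi.single_apply]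
    | zero => simp
    | add u v _ _ hu hv => simp [hu.1, hu.2, hv.1, hv.2]
    | smul a v _ hv => simp [hv.1, hv.2]
  · rintro ⟨h0, h1⟩
    have : x = x 2 • T 2 + x 3 • T 3 := by
      funext i; fin_cases i <;> simp [T, Pi.single_apply, h0, h1]
    rw [this]
    exact add_mem (Submodule.smul_mem _ _ (Submodule.subset_span (by simp)))
      (Submodule.smul_mem _ _ (Submodule.subset_span (by simp)))


/-- A linear map `R : V → V` preserves parity (maps `span{T₁,T₂}` into itself and
`span{T₃,T₄}` into itself) and is super skew-symmetric with respect to `Ω_β`, i.e.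
`Ω_β(R(x),y) + Ω_β(x,R(y)) = 0` for all `x, y ∈ V`, if and only if there exist
`m₁, m₂, m₃, m₄ ∈ ℝ` with `R(T₁) = m₁T₁ − βm₁T₂`, `R(T₂) = −m₁T₂`, `R(T₃) = m₂T₃ + m₄T₄`,
`R(T₄) = −m₃T₃ − m₂T₄` — the general form of the R-operator used in the Yang–Baxter
deformation of the `(C⁵₀+A)` WZW model. -/
theorem Roperator_general_form (β : ℝ) (R : V4 →ₗ[ℝ] V4) :
    ((∀ x ∈ spanEven, R x ∈ spanEven) ∧
     (∀ x ∈ spanOdd, R x ∈ spanOdd) ∧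
     (∀ x y : V4, OmegaForm β (R x) y + OmegaForm β x (R y) = 0)) ↔
      ∃ m₁ m₂ m₃ m₄ : ℝ,
        R (T 0) = m₁ • T 0 + (-(β * m₁)) • T 1 ∧
        R (T 1) = (-m₁) • T 1 ∧
        R (T 2) = m₂ • T 2 + m₄ • T 3 ∧
        R (T 3) = (-m₃) • T 2 + (-m₂) • T 3 := by
  constructor
  · rintro ⟨heven, hodd, hskew⟩
    have hT0 : T 0 ∈ spanEven := Submodule.subset_span (by simp)
    have hT1 : T 1 ∈ spanEven := Submodule.subset_span (by simp)
    have hT2 : T 2 ∈ spanOdd := Submodule.subset_span (by simp)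
    have hT3 : T 3 ∈ spanOdd := Submodule.subset_span (by simp)
    obtain ⟨a2, a3⟩ := (mem_spanEven_iff _).1 (heven _ hT0)
    obtain ⟨b2, b3⟩ := (mem_spanEven_iff _).1 (heven _ hT1)
    obtain ⟨c0, c1⟩ := (mem_spanOdd_iff _).1 (hodd _ hT2)
    obtain ⟨d0, d1⟩ := (mem_spanOdd_iff _).1 (hodd _ hT3)
    have e00 := hskew (T 0) (T 0)
    have e01 := hskew (T 0) (T 1)
    have e11 := hskew (T 1) (T 1)
    have e23 := hskew (T 2) (T 3)
    simp only [OmegaForm, T, Pi.single_apply, finNe.1, finNe.2.1, finNe.2.2.1, finNe.2.2.2.1, finNe.2.2.2.2.1, finNe.2.2.2.2.2.1, finNe.2.2.2.2.2.2.1, finNe.2.2.2.2.2.2.2.1, finNe.2.2.2.2.2.2.2.2.1, finNe.2.2.2.2.2.2.2.2.2.1, finNe.2.2.2.2.2.2.2.2.2.2.1, finNe.2.2.2.2.2.2.2.2.2.2.2] at e00 e01 e11 e23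
    norm_num at e00 e01 e11 e23
    simp only [T] at a2 a3 b2 b3 c0 c1 d0 d1
    rw [e11] at e01
    refine ⟨R (T 0) 0, R (T 2) 2, -(R (T 3) 2), R (T 2) 3, ?_, ?_, ?_, ?_⟩ <;>
      funext i <;> fin_cases i <;>
      simp [T, Pi.single_apply, finNe.1, finNe.2.1, finNe.2.2.1, finNe.2.2.2.1, finNe.2.2.2.2.1, finNe.2.2.2.2.2.1, finNe.2.2.2.2.2.2.1, finNe.2.2.2.2.2.2.2.1, finNe.2.2.2.2.2.2.2.2.1, finNe.2.2.2.2.2.2.2.2.2.1, finNe.2.2.2.2.2.2.2.2.2.2.1, finNe.2.2.2.2.2.2.2.2.2.2.2, a2, a3, b2, b3, c0, c1, d0, d1] <;>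
      linarith
  · rintro ⟨m₁, m₂, m₃, m₄, h0, h1, h2, h3⟩
    have hRx : ∀ x : V4, R x = x 0 • R (T 0) + x 1 • R (T 1) + x 2 • R (T 2) + x 3 • R (T 3) := by
      intro x
      conv_lhs => rw [decomp x]
      simp [map_add, map_smul]
    refine ⟨?_, ?_, ?_⟩
    · intro x hx
      rw [hRx x, h0, h1]
      obtain ⟨hx2, hx3⟩ := (mem_spanEven_iff _).1 hx
      rw [mem_spanEven_iff]
      constructor <;> simp [hx2, hx3, T, Pi.single_apply]
    · intro x hx
      rw [hRx x, h2, h3]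
      obtain ⟨hx0, hx1⟩ := (mem_spanOdd_iff _).1 hx
      rw [mem_spanOdd_iff]
      constructor <;> simp [hx0, hx1, T, Pi.single_apply]
    · intro x y
      rw [hRx x, hRx y, h0, h1, h2, h3]
      simp only [OmegaForm, Pi.add_apply, Pi.smul_apply, T, Pi.single_apply, finNe.1, finNe.2.1, finNe.2.2.1, finNe.2.2.2.1, finNe.2.2.2.2.1, finNe.2.2.2.2.2.1, finNe.2.2.2.2.2.2.1, finNe.2.2.2.2.2.2.2.1, finNe.2.2.2.2.2.2.2.2.1, finNe.2.2.2.2.2.2.2.2.2.1, finNe.2.2.2.2.2.2.2.2.2.2.1, finNe.2.2.2.2.2.2.2.2.2.2.2, smul_eq_mul]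
      norm_num
      ring
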